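/- arXiv:1210.4609 — 5 statements merged into one kernel-verified Lean document; each statement's English description precedes it below -/
import Mathlib

section
/- Let F, G : Ω → ℂ be continuously differentiable on an open set Ω ⊆ ℂ with F·conj(G) − conj(F)·G ≠ 0 everywhere, let φ, ψ : Ω → ℝ be real-valued continuously differentiable functions, and set W = φ·F + ψ·G. Then ∂_z W − A_{(F,G)}·W − B_{(F,G)}·conj(W) = (∂_z φ)·F + (∂_z ψ)·G at every point of Ω. -/
/-- The operator `∂_z = ∂_x - i·∂_y` (without the customary factor 1/2). -/
noncomputable def pdz (W : ℂ → ℂ) (z : ℂ) : ℂ :=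
  fderiv ℝ W z 1 - Complex.I * fderiv ℝ W z Complex.I

/-- The operator `∂_z̄ = ∂_x + i·∂_y` (without the customary factor 1/2). -/
noncomputable def pdzbar (W : ℂ → ℂ) (z : ℂ) : ℂ :=
  fderiv ℝ W z 1 + Complex.I * fderiv ℝ W z Complex.I

/-- Characteristic coefficient `A_{(F,G)}`. -/
noncomputable def coefA (F G : ℂ → ℂ) (z : ℂ) : ℂ :=
  -(((starRingEnd ℂ) (F z) * pdz G z - (starRingEnd ℂ) (G z) * pdz F z) /
    (F z * (starRingEnd ℂ) (G z) - (starRingEnd ℂ) (F z) * G z))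

/-- Characteristic coefficient `B_{(F,G)}`. -/
noncomputable def coefB (F G : ℂ → ℂ) (z : ℂ) : ℂ :=
  (F z * pdz G z - G z * pdz F z) /
    (F z * (starRingEnd ℂ) (G z) - (starRingEnd ℂ) (F z) * G z)

/-- Characteristic coefficient `a_{(F,G)}`. -/
noncomputable def coefa (F G : ℂ → ℂ) (z : ℂ) : ℂ :=
  -(((starRingEnd ℂ) (F z) * pdzbar G z - (starRingEnd ℂ) (G z) * pdzbar F z) /
    (F z * (starRingEnd ℂ) (G z) - (starRingEnd ℂ) (F z) * G z))

/-- Characteristic coefficient `b_{(F,G)}`. -/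
noncomputable def coefb (F G : ℂ → ℂ) (z : ℂ) : ℂ :=
  (F z * pdzbar G z - G z * pdzbar F z) /
    (F z * (starRingEnd ℂ) (G z) - (starRingEnd ℂ) (F z) * G z)

section ProductRule

variable {f g : ℂ → ℂ} {z : ℂ}

lemma pdz_add (hf : DifferentiableAt ℝ f z) (hg : DifferentiableAt ℝ g z) :
    pdz (fun w => f w + g w) z = pdz f z + pdz g z := by
  simp only [pdz, fderiv_fun_add hf hg, add_apply]
  ring

lemma pdz_mul (hf : DifferentiableAt ℝ f z) (hg : DifferentiableAt ℝ g z) :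
    pdz (fun w => f w * g w) z = pdz f z * g z + f z * pdz g z := by
  simp only [pdz, fderiv_fun_mul hf hg, add_apply, smul_apply, smul_eq_mul]
  ring

end ProductRule

/-- `A`, `B` solve `A F + B F̄ = ∂_z F`, `A G + B Ḡ = ∂_z G` by Cramer's rule; as `conj` fixes
real coefficients, the identity extends to real combinations of `F` and `G`. -/
lemma coefA_mul_add_coefB_mul_conj (F G : ℂ → ℂ) {z : ℂ}
    (hne : F z * (starRingEnd ℂ) (G z) - (starRingEnd ℂ) (F z) * G z ≠ 0) (a b : ℝ) :
    coefA F G z * (a * F z + b * G z) + coefB F G z * (starRingEnd ℂ) (a * F z + b * G z) =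
      a * pdz F z + b * pdz G z := by
  have hne' : (starRingEnd ℂ) (G z) * F z - (starRingEnd ℂ) (F z) * G z ≠ 0 := by
    rwa [mul_comm (starRingEnd ℂ (G z))]
  simp only [coefA, coefB, map_add, map_mul, Complex.conj_ofReal]
  field_simp
  ring

/-- For `W = φ·F + ψ·G` with real-valued `C¹` coefficient functions φ, ψ,
one has `∂_z W − A·W − B·conj W = (∂_z φ)·F + (∂_z ψ)·G` on Ω. -/
theorem FG_derivative_formula (Ω : Set ℂ) (hΩ : IsOpen Ω) (F G : ℂ → ℂ)
    (hF : ContDiffOn ℝ 1 F Ω) (hG : ContDiffOn ℝ 1 G Ω)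
    (hne : ∀ z ∈ Ω, F z * (starRingEnd ℂ) (G z) - (starRingEnd ℂ) (F z) * G z ≠ 0)
    (φ ψ : ℂ → ℝ) (hφ : ContDiffOn ℝ 1 φ Ω) (hψ : ContDiffOn ℝ 1 ψ Ω)
    (W : ℂ → ℂ) (hW : W = fun w => ((φ w : ℝ) : ℂ) * F w + ((ψ w : ℝ) : ℂ) * G w) :
    ∀ z ∈ Ω,
      pdz W z - coefA F G z * W z - coefB F G z * (starRingEnd ℂ) (W z) =
        pdz (fun w => ((φ w : ℝ) : ℂ)) z * F z + pdz (fun w => ((ψ w : ℝ) : ℂ)) z * G z := by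
  intro z hz
  have hdiff {f : ℂ → ℂ} (hf : ContDiffOn ℝ 1 f Ω) : DifferentiableAt ℝ f z :=
    (hf.differentiableOn one_ne_zero).differentiableAt (hΩ.mem_nhds hz)
  have hφd : DifferentiableAt ℝ (fun w => (φ w : ℂ)) z :=
    hdiff (Complex.ofRealCLM.contDiff.comp_contDiffOn hφ)
  have hψd : DifferentiableAt ℝ (fun w => (ψ w : ℂ)) z :=
    hdiff (Complex.ofRealCLM.contDiff.comp_contDiffOn hψ)
  have hWd : pdz W z = pdz (fun w => ((φ w : ℝ) : ℂ)) z * F z + φ z * pdz F z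
      + (pdz (fun w => ((ψ w : ℝ) : ℂ)) z * G z + ψ z * pdz G z) := by
    rw [hW, pdz_add (hφd.fun_mul (hdiff hF)) (hψd.fun_mul (hdiff hG)),
      pdz_mul hφd (hdiff hF), pdz_mul hψd (hdiff hG)]
  rw [sub_sub, hW, coefA_mul_add_coefB_mul_conj F G (hne z hz), ← hW, hWd]
  ring
end

section
/- Let F, G : Ω → ℂ be continuously differentiable on an open set Ω ⊆ ℂ with F·conj(G) − conj(F)·G ≠ 0 everywhere, let φ, ψ : Ω → ℝ be real-valued continuously differentiable functions, and set W = φ·F + ψ·G. Then ∂_z̄ W − a_{(F,G)}·W − b_{(F,G)}·conj(W) = (∂_z̄ φ)·F + (∂_z̄ ψ)·G at every point of Ω. In particular, W satisfies the Vekua equation ∂_z̄W − a_{(F,G)}W − b_{(F,G)}·conj(W) = 0 if and only if (∂_z̄ φ)·F + (∂_z̄ ψ)·G = 0. -/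
lemma pdzbar_add {f g : ℂ → ℂ} {z : ℂ} (hf : DifferentiableAt ℝ f z)
    (hg : DifferentiableAt ℝ g z) :
    pdzbar (fun w => f w + g w) z = pdzbar f z + pdzbar g z := by
  simp only [pdzbar, fderiv_fun_add hf hg, add_apply]
  ring

lemma pdzbar_mul {f g : ℂ → ℂ} {z : ℂ} (hf : DifferentiableAt ℝ f z)
    (hg : DifferentiableAt ℝ g z) :
    pdzbar (fun w => f w * g w) z = pdzbar f z * g z + f z * pdzbar g z := by
  simp only [pdzbar, fderiv_fun_mul hf hg, add_apply, smul_apply, smul_eq_mul]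
  ring

section Characteristic

variable {F G : ℂ → ℂ} {z : ℂ}
  (hD : F z * (starRingEnd ℂ) (G z) - (starRingEnd ℂ) (F z) * G z ≠ 0)
include hD

lemma coefa_mul_left_add_coefb_mul_conj_left :
    coefa F G z * F z + coefb F G z * (starRingEnd ℂ) (F z) = pdzbar F z := by
  rw [coefa, coefb, neg_div', div_mul_eq_mul_div, div_mul_eq_mul_div, ← add_div, div_eq_iff hD]
  ring

lemma coefa_mul_right_add_coefb_mul_conj_right :
    coefa F G z * G z + coefb F G z * (starRingEnd ℂ) (G z) = pdzbar G z := by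
  rw [coefa, coefb, neg_div', div_mul_eq_mul_div, div_mul_eq_mul_div, ← add_div, div_eq_iff hD]
  ring

end Characteristic

/-- For `W = φ·F + ψ·G` with real-valued `C¹` coefficient functions φ, ψ,
one has `∂_z̄ W − a·W − b·conj W = (∂_z̄ φ)·F + (∂_z̄ ψ)·G` on Ω; in particular W satisfies
the Vekua equation iff `(∂_z̄ φ)·F + (∂_z̄ ψ)·G = 0`. -/
theorem Vekua_existence_criterion (Ω : Set ℂ) (hΩ : IsOpen Ω) (F G : ℂ → ℂ)
    (hF : ContDiffOn ℝ 1 F Ω) (hG : ContDiffOn ℝ 1 G Ω)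
    (hne : ∀ z ∈ Ω, F z * (starRingEnd ℂ) (G z) - (starRingEnd ℂ) (F z) * G z ≠ 0)
    (φ ψ : ℂ → ℝ) (hφ : ContDiffOn ℝ 1 φ Ω) (hψ : ContDiffOn ℝ 1 ψ Ω)
    (W : ℂ → ℂ) (hW : W = fun w => ((φ w : ℝ) : ℂ) * F w + ((ψ w : ℝ) : ℂ) * G w) :
    ∀ z ∈ Ω,
      (pdzbar W z - coefa F G z * W z - coefb F G z * (starRingEnd ℂ) (W z) =
        pdzbar (fun w => ((φ w : ℝ) : ℂ)) z * F z + pdzbar (fun w => ((ψ w : ℝ) : ℂ)) z * G z) ∧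
      ((pdzbar W z - coefa F G z * W z - coefb F G z * (starRingEnd ℂ) (W z) = 0 ↔
        pdzbar (fun w => ((φ w : ℝ) : ℂ)) z * F z + pdzbar (fun w => ((ψ w : ℝ) : ℂ)) z * G z = 0)) := by
  intro z hz
  have hΩz := hΩ.mem_nhds hz
  have hFz := (hF.contDiffAt hΩz).differentiableAt one_ne_zero
  have hGz := (hG.contDiffAt hΩz).differentiableAt one_ne_zero
  have hφz : DifferentiableAt ℝ (fun w => (φ w : ℂ)) z :=
    Complex.differentiable_ofReal.differentiableAt.comp z
      ((hφ.contDiffAt hΩz).differentiableAt one_ne_zero)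
  have hψz : DifferentiableAt ℝ (fun w => (ψ w : ℂ)) z :=
    Complex.differentiable_ofReal.differentiableAt.comp z
      ((hψ.contDiffAt hΩz).differentiableAt one_ne_zero)
  have leibniz : pdzbar W z =
      pdzbar (fun w => ((φ w : ℝ) : ℂ)) z * F z + (φ z : ℂ) * pdzbar F z +
      (pdzbar (fun w => ((ψ w : ℝ) : ℂ)) z * G z + (ψ z : ℂ) * pdzbar G z) := by
    rw [hW, pdzbar_add (hφz.fun_mul hFz) (hψz.fun_mul hGz), pdzbar_mul hφz hFz,
      pdzbar_mul hψz hGz]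
  have conj_W : (starRingEnd ℂ) (W z) =
      (φ z : ℂ) * (starRingEnd ℂ) (F z) + (ψ z : ℂ) * (starRingEnd ℂ) (G z) := by
    simp [hW]
  have main : pdzbar W z - coefa F G z * W z - coefb F G z * (starRingEnd ℂ) (W z) =
      pdzbar (fun w => ((φ w : ℝ) : ℂ)) z * F z + pdzbar (fun w => ((ψ w : ℝ) : ℂ)) z * G z := by
    rw [leibniz, conj_W, hW, ← coefa_mul_left_add_coefb_mul_conj_left (hne z hz),
      ← coefa_mul_right_add_coefb_mul_conj_right (hne z hz)]
    ring
  exact ⟨main, by rw [main]⟩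
end

section
/- Let p₁ : ℝ → ℝ and p₂ : ℝ → ℝ be positive continuously differentiable functions, and regard p(x,y) = p₁(x)p₂(y) as a function on ℝ². Define the pairs F_odd(x,y) = p₁(x)p₂(y), G_odd(x,y) = i/(p₁(x)p₂(y)), and F_even(x,y) = p₂(y)/p₁(x), G_even(x,y) = i·p₁(x)/p₂(y). Then (F_even, G_even) is a successor of (F_odd, G_odd) and (F_odd, G_odd) is a successor of (F_even, G_even); that is, B_{(F_even,G_even)} = −b_{(F_odd,G_odd)} and B_{(F_odd,G_odd)} = −b_{(F_even,G_even)} hold at every point. Consequently the generating pair (p, i/p) is embedded into a periodic generating sequence with period 2, obtained by alternating these two pairs. -/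
/-!
For a real-valued `u`, the pair `(u, i/u)` has characteristic denominator `-2i`, and its
coefficients reduce to logarithmic derivatives: `B = ∂_z u / u` and `b = ∂_z̄ u / u`.
For `u = g₁(x) g₂(y)` these are `(log g₁)' ∓ i (log g₂)'`. Replacing `p₁ p₂` by `p₂ / p₁` flips
the sign of `(log p₁)'` alone, which turns `B` of one pair into `-b` of the other.
-/

open Complex

theorem HasFDerivAt.inv {𝕜 E : Type*} [NontriviallyNormedField 𝕜] [NormedAddCommGroup E]
    [NormedSpace 𝕜 E] {c : E → 𝕜} {c' : E →L[𝕜] 𝕜} {x : E} (hc : HasFDerivAt c c' x)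
    (hx : c x ≠ 0) : HasFDerivAt (fun y => (c y)⁻¹) ((-(c x ^ 2)⁻¹) • c') x :=
  (hasDerivAt_inv hx).comp_hasFDerivAt x hc

theorem logDeriv_fun_inv {𝕜 𝕜' : Type*} [NontriviallyNormedField 𝕜] [NontriviallyNormedField 𝕜']
    [NormedAlgebra 𝕜 𝕜'] {f : 𝕜 → 𝕜'} {x : 𝕜} (hf : DifferentiableAt 𝕜 f x) :
    logDeriv (fun y => (f y)⁻¹) x = -logDeriv f x := by
  simpa using logDeriv_fun_zpow hf (-1)

section Wirtinger

variable {u : ℂ → ℝ} {L : ℂ →L[ℝ] ℝ} {z : ℂ}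

theorem HasFDerivAt.pdz_eq {f : ℂ → ℂ} {D : ℂ →L[ℝ] ℂ} (h : HasFDerivAt f D z) :
    pdz f z = D 1 - I * D I := by
  rw [pdz, h.fderiv]

theorem HasFDerivAt.pdzbar_eq {f : ℂ → ℂ} {D : ℂ →L[ℝ] ℂ} (h : HasFDerivAt f D z) :
    pdzbar f z = D 1 + I * D I := by
  rw [pdzbar, h.fderiv]

theorem hasFDerivAt_const_mul_ofReal (c : ℂ) (hu : HasFDerivAt u L z) :
    HasFDerivAt (fun w => c * (u w : ℂ)) (c • ofRealCLM.comp L) z :=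
  (ofRealCLM.hasFDerivAt.comp z hu).const_mul c

theorem pdz_const_mul_ofReal (c : ℂ) (hu : HasFDerivAt u L z) :
    pdz (fun w => c * (u w : ℂ)) z = c * (L 1 - I * L I) := by
  rw [(hasFDerivAt_const_mul_ofReal c hu).pdz_eq]
  simp only [smul_apply, ContinuousLinearMap.comp_apply, ofRealCLM_apply, smul_eq_mul]
  ring

theorem pdzbar_const_mul_ofReal (c : ℂ) (hu : HasFDerivAt u L z) :
    pdzbar (fun w => c * (u w : ℂ)) z = c * (L 1 + I * L I) := by
  rw [(hasFDerivAt_const_mul_ofReal c hu).pdzbar_eq]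
  simp only [smul_apply, ContinuousLinearMap.comp_apply, ofRealCLM_apply, smul_eq_mul]
  ring

theorem pdz_ofReal (hu : HasFDerivAt u L z) : pdz (fun w => (u w : ℂ)) z = L 1 - I * L I := by
  simpa using pdz_const_mul_ofReal 1 hu

theorem pdzbar_ofReal (hu : HasFDerivAt u L z) :
    pdzbar (fun w => (u w : ℂ)) z = L 1 + I * L I := by
  simpa using pdzbar_const_mul_ofReal 1 hu

end Wirtinger

/-- The generating pair `(u, i/u)` of a real-valued function `u`. -/
noncomputable def realInvPair (u : ℂ → ℝ) : (ℂ → ℂ) × (ℂ → ℂ) :=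
  (fun w => (u w : ℂ), fun w => I * ((u w)⁻¹ : ℝ))

section RealInvPair

variable {u : ℂ → ℝ} {L : ℂ →L[ℝ] ℝ} {z : ℂ}

theorem coefB_realInvPair (hu : HasFDerivAt u L z) (hz : u z ≠ 0) :
    coefB (realInvPair u).1 (realInvPair u).2 z = (L 1 - I * L I) / u z := by
  simp only [coefB, realInvPair, pdz_ofReal hu, pdz_const_mul_ofReal I (hu.inv hz)]
  have : (u z : ℂ) ≠ 0 := by exact_mod_cast hz
  simp only [smul_apply, smul_eq_mul, ofReal_neg, ofReal_mul, ofReal_inv, ofReal_pow, map_mul,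
    conj_I, map_inv₀, conj_ofReal]
  field_simp
  ring

theorem coefb_realInvPair (hu : HasFDerivAt u L z) (hz : u z ≠ 0) :
    coefb (realInvPair u).1 (realInvPair u).2 z = (L 1 + I * L I) / u z := by
  simp only [coefb, realInvPair, pdzbar_ofReal hu, pdzbar_const_mul_ofReal I (hu.inv hz)]
  have : (u z : ℂ) ≠ 0 := by exact_mod_cast hz
  simp only [smul_apply, smul_eq_mul, ofReal_neg, ofReal_mul, ofReal_inv, ofReal_pow, map_mul,
    conj_I, map_inv₀, conj_ofReal]
  field_simp
  ring

end RealInvPair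

section Separable

variable {g₁ g₂ : ℝ → ℝ} {z : ℂ}

theorem hasFDerivAt_mul_re_im (h₁ : DifferentiableAt ℝ g₁ z.re)
    (h₂ : DifferentiableAt ℝ g₂ z.im) :
    HasFDerivAt (fun w : ℂ => g₁ w.re * g₂ w.im)
      (g₁ z.re • deriv g₂ z.im • imCLM + g₂ z.im • deriv g₁ z.re • reCLM) z :=
  (h₁.hasDerivAt.comp_hasFDerivAt z reCLM.hasFDerivAt).mul
    (h₂.hasDerivAt.comp_hasFDerivAt z imCLM.hasFDerivAt)

theorem coefB_realInvPair_mul_re_im (h₁ : DifferentiableAt ℝ g₁ z.re)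
    (h₂ : DifferentiableAt ℝ g₂ z.im) (hg₁ : g₁ z.re ≠ 0) (hg₂ : g₂ z.im ≠ 0) :
    coefB (realInvPair fun w => g₁ w.re * g₂ w.im).1 (realInvPair fun w => g₁ w.re * g₂ w.im).2 z
      = logDeriv g₁ z.re - I * logDeriv g₂ z.im := by
  rw [coefB_realInvPair (hasFDerivAt_mul_re_im h₁ h₂) (mul_ne_zero hg₁ hg₂)]
  have : (g₁ z.re : ℂ) ≠ 0 := by exact_mod_cast hg₁
  have : (g₂ z.im : ℂ) ≠ 0 := by exact_mod_cast hg₂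
  simp [logDeriv_apply, field]

theorem coefb_realInvPair_mul_re_im (h₁ : DifferentiableAt ℝ g₁ z.re)
    (h₂ : DifferentiableAt ℝ g₂ z.im) (hg₁ : g₁ z.re ≠ 0) (hg₂ : g₂ z.im ≠ 0) :
    coefb (realInvPair fun w => g₁ w.re * g₂ w.im).1 (realInvPair fun w => g₁ w.re * g₂ w.im).2 z
      = logDeriv g₁ z.re + I * logDeriv g₂ z.im := by
  rw [coefb_realInvPair (hasFDerivAt_mul_re_im h₁ h₂) (mul_ne_zero hg₁ hg₂)]
  have : (g₁ z.re : ℂ) ≠ 0 := by exact_mod_cast hg₁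
  have : (g₂ z.im : ℂ) ≠ 0 := by exact_mod_cast hg₂
  simp [logDeriv_apply, field]

end Separable

def IsSuccessor (P Q : (ℂ → ℂ) × (ℂ → ℂ)) : Prop :=
  ∀ z, coefB Q.1 Q.2 z = -coefb P.1 P.2 z

theorem exists_periodic_of_isSuccessor_of_isSuccessor {P Q : (ℂ → ℂ) × (ℂ → ℂ)}
    (hPQ : IsSuccessor P Q) (hQP : IsSuccessor Q P) :
    ∃ seq : ℤ → (ℂ → ℂ) × (ℂ → ℂ),
      seq 0 = P ∧ (∀ m, IsSuccessor (seq m) (seq (m + 1))) ∧ ∀ m, seq (m + 2) = seq m := by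
  refine ⟨fun m => if Even m then P else Q, by simp, fun m => ?_, fun m => by simp⟩
  by_cases hm : Even m
  · simpa only [hm, Int.even_add_one, not_true_eq_false, if_true, if_false] using hPQ
  · simpa only [hm, Int.even_add_one, not_false_eq_true, if_true, if_false] using hQP

/-- For positive `C¹` functions p₁(x), p₂(y), the pairs
`(p₁p₂, i/(p₁p₂))` ("odd") and `(p₂/p₁, i·p₁/p₂)` ("even") are successors of each other:
`B_{even} = −b_{odd}` and `B_{odd} = −b_{even}` at every point.  Consequently the generating
pair `(p, i/p)` with `p = p₁p₂` is embedded into a periodic generating sequence of period 2,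
obtained by alternating these two pairs. -/
theorem separable_generating_sequence_period_two (p₁ p₂ : ℝ → ℝ)
    (h₁ : ContDiff ℝ 1 p₁) (h₂ : ContDiff ℝ 1 p₂)
    (hp₁ : ∀ x, 0 < p₁ x) (hp₂ : ∀ y, 0 < p₂ y)
    (Fodd Godd Feven Geven : ℂ → ℂ)
    (hFo : Fodd = fun z => ((p₁ z.re * p₂ z.im : ℝ) : ℂ))
    (hGo : Godd = fun z => Complex.I / ((p₁ z.re * p₂ z.im : ℝ) : ℂ))
    (hFe : Feven = fun z => ((p₂ z.im / p₁ z.re : ℝ) : ℂ))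
    (hGe : Geven = fun z => Complex.I * ((p₁ z.re / p₂ z.im : ℝ) : ℂ)) :
    (∀ z : ℂ, coefB Feven Geven z = - coefb Fodd Godd z) ∧
    (∀ z : ℂ, coefB Fodd Godd z = - coefb Feven Geven z) ∧
    ∃ seq : ℤ → (ℂ → ℂ) × (ℂ → ℂ),
      seq 0 = (Fodd, Godd) ∧
      (∀ m : ℤ, ∀ z : ℂ,
        coefB (seq (m + 1)).1 (seq (m + 1)).2 z = - coefb (seq m).1 (seq m).2 z) ∧
      (∀ m : ℤ, seq (m + 2) = seq m) := by
  have hd₁ x : DifferentiableAt ℝ p₁ x := h₁.differentiable one_ne_zero x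
  have hd₂ y : DifferentiableAt ℝ p₂ y := h₂.differentiable one_ne_zero y
  have hd₁_inv x : DifferentiableAt ℝ (fun x => (p₁ x)⁻¹) x := (hd₁ x).inv (hp₁ x).ne'
  have hodd : (Fodd, Godd) = realInvPair fun w => p₁ w.re * p₂ w.im := by
    subst hFo hGo
    simp [realInvPair, div_eq_mul_inv]
  have heven : (Feven, Geven) = realInvPair fun w => (p₁ w.re)⁻¹ * p₂ w.im := by
    subst hFe hGe
    simp [realInvPair, div_eq_mul_inv, mul_comm]
  have hodd_even : IsSuccessor (Fodd, Godd) (Feven, Geven) := fun z => by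
    rw [hodd, heven, coefB_realInvPair_mul_re_im (hd₁_inv _) (hd₂ _) (inv_ne_zero (hp₁ _).ne')
      (hp₂ _).ne', coefb_realInvPair_mul_re_im (hd₁ _) (hd₂ _) (hp₁ _).ne' (hp₂ _).ne',
      logDeriv_fun_inv (hd₁ _)]
    push_cast
    ring
  have heven_odd : IsSuccessor (Feven, Geven) (Fodd, Godd) := fun z => by
    rw [hodd, heven, coefB_realInvPair_mul_re_im (hd₁ _) (hd₂ _) (hp₁ _).ne' (hp₂ _).ne',
      coefb_realInvPair_mul_re_im (hd₁_inv _) (hd₂ _) (inv_ne_zero (hp₁ _).ne') (hp₂ _).ne',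
      logDeriv_fun_inv (hd₁ _)]
    push_cast
    ring
  exact ⟨hodd_even, heven_odd, exists_periodic_of_isSuccessor_of_isSuccessor hodd_even heven_odd⟩
end

section
/- Let p₂ : ℝ → ℝ be a positive continuously differentiable function, and define on ℝ² the pair F(x,y) = p₂(y), G(x,y) = i/p₂(y). Then (F, G) is its own successor: B_{(F,G)} = −b_{(F,G)} at every point. Consequently the generating pair (F, G) is embedded into a periodic generating sequence with period 1. -/
/-!
A function of `y = im z` alone is invariant under horizontal translation, so its `x`-derivative
vanishes and `∂_z` and `∂_z̄` reduce to `∓ i ∂_y`. The numerators of `B_{(F,G)}` and `b_{(F,G)}`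
are the same bilinear expression in these operators, hence `B_{(F,G)} = -b_{(F,G)}`, and the constant
sequence does the rest.
-/

theorem fderiv_apply_eq_zero_of_forall_add_smul {𝕜 E F : Type*} [NontriviallyNormedField 𝕜]
    [NormedAddCommGroup E] [NormedSpace 𝕜 E] [NormedAddCommGroup F] [NormedSpace 𝕜 F]
    {f : E → F} {x v : E} (h : ∀ t : 𝕜, f (x + t • v) = f x) : fderiv 𝕜 f x v = 0 := by
  by_cases hf : DifferentiableAt 𝕜 f x
  · rw [← hf.lineDeriv_eq_fderiv, lineDeriv, funext h, deriv_const]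
  · rw [fderiv_zero_of_not_differentiableAt hf, zero_apply]

theorem pdz_eq_neg_pdzbar {W : ℂ → ℂ} {z : ℂ} (hW : fderiv ℝ W z 1 = 0) :
    pdz W z = -pdzbar W z := by
  rw [pdz, pdzbar, hW]
  ring

theorem coefB_eq_neg_coefb {F G : ℂ → ℂ} {z : ℂ} (hF : fderiv ℝ F z 1 = 0)
    (hG : fderiv ℝ G z 1 = 0) : coefB F G z = -coefb F G z := by
  rw [coefB, coefb, pdz_eq_neg_pdzbar hF, pdz_eq_neg_pdzbar hG, ← neg_div]
  ring

theorem fderiv_comp_im_apply_one (g : ℝ → ℂ) (z : ℂ) :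
    fderiv ℝ (fun w : ℂ => g w.im) z 1 = 0 :=
  fderiv_apply_eq_zero_of_forall_add_smul fun t => by simp

theorem generating_sequence_period_one_general (p₂ : ℝ → ℝ)
    (F G : ℂ → ℂ)
    (hF : F = fun z => ((p₂ z.im : ℝ) : ℂ))
    (hG : G = fun z => Complex.I / ((p₂ z.im : ℝ) : ℂ)) :
    (∀ z : ℂ, coefB F G z = - coefb F G z) ∧
    ∃ seq : ℤ → (ℂ → ℂ) × (ℂ → ℂ),
      seq 0 = (F, G) ∧
      (∀ m : ℤ, ∀ z : ℂ,
        coefB (seq (m + 1)).1 (seq (m + 1)).2 z = - coefb (seq m).1 (seq m).2 z) ∧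
      (∀ m : ℤ, seq (m + 1) = seq m) := by
  have self_successor : ∀ z : ℂ, coefB F G z = -coefb F G z := fun z => by
    subst hF hG
    exact coefB_eq_neg_coefb (fderiv_comp_im_apply_one (fun y => (p₂ y : ℂ)) z)
      (fderiv_comp_im_apply_one (fun y => Complex.I / (p₂ y : ℂ)) z)
  exact ⟨self_successor, fun _ => (F, G), rfl, fun _ => self_successor, fun _ => rfl⟩

/-- For a positive `C¹` function p₂(y), the pair `F = p₂(y)`, `G = i/p₂(y)`
is its own successor: `B_{(F,G)} = −b_{(F,G)}` at every point.  Consequently `(F, G)` is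
embedded into a periodic generating sequence of period 1. -/
theorem generating_sequence_period_one (p₂ : ℝ → ℝ)
    (h₂ : ContDiff ℝ 1 p₂) (hp₂ : ∀ y, 0 < p₂ y)
    (F G : ℂ → ℂ)
    (hF : F = fun z => ((p₂ z.im : ℝ) : ℂ))
    (hG : G = fun z => Complex.I / ((p₂ z.im : ℝ) : ℂ)) :
    (∀ z : ℂ, coefB F G z = - coefb F G z) ∧
    ∃ seq : ℤ → (ℂ → ℂ) × (ℂ → ℂ),
      seq 0 = (F, G) ∧
      (∀ m : ℤ, ∀ z : ℂ,
        coefB (seq (m + 1)).1 (seq (m + 1)).2 z = - coefb (seq m).1 (seq m).2 z) ∧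
      (∀ m : ℤ, seq (m + 1) = seq m) :=
  generating_sequence_period_one_general p₂ F G hF hG
end

section
/- Let α be a real constant, σ(x,y) = 1 + sin(α·x·y), and u(x,y) = (tan(α·x·y/2) + 1)⁻¹. Let Ω = {(x,y) ∈ ℝ² : cos(α·x·y/2) ≠ 0 and tan(α·x·y/2) + 1 ≠ 0}. Then u is a solution of the two-dimensional electrical impedance equation ∇·(σ∇u) = 0 at every point of Ω, i.e. ∂_x(σ ∂_x u) + ∂_y(σ ∂_y u) = 0 on Ω. -/
/-!
On every line parallel to an axis the equation reduces to one variable: with `c = αy/2`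
(resp. `αx/2`) and `θ = ct`, the potential is `(tan θ + 1)⁻¹` with derivative
`-c / (cos θ (tan θ + 1))²`, while `σ = 1 + sin 2θ = (cos θ (tan θ + 1))²`. So the flux
`σ ∂u` is the constant `-c` near the point, and each of the two terms vanishes.
-/

open Real Filter Topology

lemma hasDerivAt_inv_tan_mul_add_one {c t : ℝ} (hc : cos (c * t) ≠ 0)
    (ht : tan (c * t) + 1 ≠ 0) :
    HasDerivAt (fun s => (tan (c * s) + 1)⁻¹)
      (-(c / (cos (c * t) * (tan (c * t) + 1)) ^ 2)) t := by
  have hlin : HasDerivAt (fun s => c * s) c t := by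
    simpa using (hasDerivAt_id t).const_mul c
  have htan : HasDerivAt (fun s => tan (c * s) + 1) (1 / cos (c * t) ^ 2 * c) t :=
    ((hasDerivAt_tan hc).comp t hlin).add_const 1
  exact (htan.inv ht).congr_deriv (by field_simp)

lemma one_add_sin_two_mul_eq_sq {θ : ℝ} (hc : cos θ ≠ 0) :
    1 + sin (2 * θ) = (cos θ * (tan θ + 1)) ^ 2 := by
  rw [tan_eq_sin_div_cos, sin_two_mul, mul_add, mul_div_cancel₀ _ hc]
  nlinarith [sin_sq_add_cos_sq θ]

lemma flux_eq_neg {c t : ℝ} (hc : cos (c * t) ≠ 0) (ht : tan (c * t) + 1 ≠ 0) :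
    (1 + sin (2 * (c * t))) * deriv (fun s => (tan (c * s) + 1)⁻¹) t = -c := by
  rw [(hasDerivAt_inv_tan_mul_add_one hc ht).deriv, one_add_sin_two_mul_eq_sq hc]
  field_simp

lemma deriv_flux_eq_zero {c t₀ : ℝ} (hc : cos (c * t₀) ≠ 0) (ht : tan (c * t₀) + 1 ≠ 0) :
    deriv (fun t => (1 + sin (2 * (c * t))) * deriv (fun s => (tan (c * s) + 1)⁻¹) t) t₀
      = 0 := by
  have hcos : ∀ᶠ t in 𝓝 t₀, cos (c * t) ≠ 0 :=
    (by fun_prop : Continuous fun t => cos (c * t)).continuousAt.eventually_ne hc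
  have htan : ∀ᶠ t in 𝓝 t₀, tan (c * t) + 1 ≠ 0 :=
    (((continuousAt_tan.2 hc).comp (by fun_prop : ContinuousAt (fun t => c * t) t₀)).add
      continuousAt_const).eventually_ne ht
  have hflux : (fun t => (1 + sin (2 * (c * t))) * deriv (fun s => (tan (c * s) + 1)⁻¹) t)
      =ᶠ[𝓝 t₀] fun _ => -c := by
    filter_upwards [hcos, htan] with t hct htt
    exact flux_eq_neg hct htt
  rw [hflux.deriv_eq, deriv_const]

/-- For `σ(x,y) = 1 + sin(αxy)`, the function `u(x,y) = (tan(αxy/2) + 1)⁻¹`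
solves the two-dimensional electrical impedance equation `∂_x(σ ∂_x u) + ∂_y(σ ∂_y u) = 0`
at every point of `Ω = {(x,y) : cos(αxy/2) ≠ 0 ∧ tan(αxy/2) + 1 ≠ 0}`. -/
theorem impedance_solution_sinusoidal (α x y : ℝ)
    (hc : Real.cos (α * x * y / 2) ≠ 0) (ht : Real.tan (α * x * y / 2) + 1 ≠ 0) :
    deriv (fun x' : ℝ =>
        (1 + Real.sin (α * x' * y)) *
          deriv (fun t : ℝ => (Real.tan (α * t * y / 2) + 1)⁻¹) x') x
      + deriv (fun y' : ℝ =>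
        (1 + Real.sin (α * x * y')) *
          deriv (fun t : ℝ => (Real.tan (α * x * t / 2) + 1)⁻¹) y') y = 0 := by
  have hx : α * y / 2 * x = α * x * y / 2 := by ring
  have hy : α * x / 2 * y = α * x * y / 2 := by ring
  -- the half angles must be normalised before the full ones, which would otherwise capture them
  simp only [show ∀ t, α * t * y / 2 = α * y / 2 * t from fun t => by ring,
    show ∀ t, α * x * t / 2 = α * x / 2 * t from fun t => by ring]
  simp only [show ∀ t, α * t * y = 2 * (α * y / 2 * t) from fun t => by ring,
    show ∀ t, α * x * t = 2 * (α * x / 2 * t) from fun t => by ring]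
  rw [deriv_flux_eq_zero (hx ▸ hc) (hx ▸ ht), deriv_flux_eq_zero (hy ▸ hc) (hy ▸ ht), add_zero]
end
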